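/- The union of the three pentagons P₁, P₂, P₃ of the unperturbed dissection equals the regular hexagon with vertices (cos((i-1)π/3), sin((i-1)π/3)), i = 1,…,6 (each pentagon and the hexagon being identified with the convex hull of its vertices), and the three pentagons have pairwise disjoint interiors. -/

import Mathlib

open Real

noncomputable def V₁ : Set (ℝ × ℝ) :=
  {(0, 0), (Real.sqrt 3 / 2, (-3 + 2 * Real.sqrt 3) / 2),
   (1 / 2, Real.sqrt 3 / 2), (-(1 / 2), Real.sqrt 3 / 2),
   ((-3 + Real.sqrt 3) / 2, (3 - Real.sqrt 3) / 2)}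

noncomputable def V₂ : Set (ℝ × ℝ) :=
  {(0, 0), ((-3 + Real.sqrt 3) / 2, (3 - Real.sqrt 3) / 2),
   (-1, 0), (-(1 / 2), -(Real.sqrt 3) / 2),
   ((3 - 2 * Real.sqrt 3) / 2, -(Real.sqrt 3) / 2)}

noncomputable def V₃ : Set (ℝ × ℝ) :=
  {(0, 0), ((3 - 2 * Real.sqrt 3) / 2, -(Real.sqrt 3) / 2),
   (1 / 2, -(Real.sqrt 3) / 2), (1, 0),
   (Real.sqrt 3 / 2, (-3 + 2 * Real.sqrt 3) / 2)}

/-- Vertices of the regular unit hexagon. -/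
noncomputable def hexV : Set (ℝ × ℝ) :=
  Set.range fun i : Fin 6 => (Real.cos ((i : ℕ) * π / 3), Real.sin ((i : ℕ) * π / 3))


lemma s3_sq : Real.sqrt 3 * Real.sqrt 3 = 3 := Real.mul_self_sqrt (by norm_num)
lemma s3_gt : 1 < Real.sqrt 3 := by nlinarith [s3_sq, Real.sqrt_nonneg 3]
lemma s3_lt : Real.sqrt 3 < 2 := by nlinarith [s3_sq, Real.sqrt_nonneg 3]

lemma combo3_mem {T : Set (ℝ×ℝ)} {p q r : ℝ×ℝ} (hp : p ∈ T) (hq : q ∈ T) (hr : r ∈ T)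
    {a b c : ℝ} (ha : 0 ≤ a) (hb : 0 ≤ b) (hc : 0 ≤ c) (habc : a + b + c = 1) :
    a • p + b • q + c • r ∈ convexHull ℝ T := by
  have h := (convex_convexHull ℝ T).sum_mem (t := (Finset.univ : Finset (Fin 3)))
    (w := ![a,b,c]) (z := ![p,q,r])
    (fun i _ => by fin_cases i <;> simpa)
    (by simp [Fin.sum_univ_three]; linarith)
    (fun i _ => by fin_cases i <;> simp <;> exact subset_convexHull ℝ T ‹_›)
  simpa [Fin.sum_univ_three] using h

lemma mem_triangle (q1 q2 r1 r2 : ℝ) {x : ℝ×ℝ} (hD : 0 < q1*r2 - q2*r1)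
    (hb : 0 ≤ x.1*r2 - x.2*r1) (hc : 0 ≤ q1*x.2 - q2*x.1)
    (ha : (x.1*r2 - x.2*r1) + (q1*x.2 - q2*x.1) ≤ q1*r2 - q2*r1) :
    x ∈ convexHull ℝ ({(0,0), (q1,q2), (r1,r2)} : Set (ℝ×ℝ)) := by
  set D := q1*r2 - q2*r1 with hDdef
  have hD' : D ≠ 0 := ne_of_gt hD
  have key := combo3_mem (T := ({(0,0), (q1,q2), (r1,r2)} : Set (ℝ×ℝ)))
    (p := ((0,0) : ℝ×ℝ)) (q := ((q1,q2) : ℝ×ℝ)) (r := ((r1,r2) : ℝ×ℝ))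
    (by simp) (by simp) (by simp)
    (a := 1 - (x.1*r2 - x.2*r1)/D - (q1*x.2 - q2*x.1)/D)
    (b := (x.1*r2 - x.2*r1)/D) (c := (q1*x.2 - q2*x.1)/D)
    (by
      have hsum : (x.1*r2 - x.2*r1)/D + (q1*x.2 - q2*x.1)/D ≤ 1 := by
        rw [← add_div]; exact (div_le_one hD).2 ha
      linarith)
    (div_nonneg hb hD.le) (div_nonneg hc hD.le) (by ring)
  have hx : x = (1 - (x.1*r2 - x.2*r1)/D - (q1*x.2 - q2*x.1)/D) • ((0,0) : ℝ×ℝ)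
      + ((x.1*r2 - x.2*r1)/D) • ((q1,q2) : ℝ×ℝ) + ((q1*x.2 - q2*x.1)/D) • ((r1,r2) : ℝ×ℝ) := by
    have h1 : x.1 * D = ((x.1*r2 - x.2*r1)) * q1 + ((q1*x.2 - q2*x.1)) * r1 := by rw [hDdef]; ring
    have h2 : x.2 * D = ((x.1*r2 - x.2*r1)) * q2 + ((q1*x.2 - q2*x.1)) * r2 := by rw [hDdef]; ring
    apply Prod.ext <;> simp [Prod.fst_add, Prod.snd_add, smul_eq_mul] <;> field_simp <;> linarith
  rw [hx]; exact key

noncomputable def hexS : Set (ℝ×ℝ) :=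
  {((1:ℝ),(0:ℝ)), (1/2, Real.sqrt 3/2), (-(1/2), Real.sqrt 3/2), (-1,0), (-(1/2), -(Real.sqrt 3/2)), (1/2, -(Real.sqrt 3/2))}

lemma hexV_eq : hexV = hexS := by
  have c2 : Real.cos (2 * π / 3) = -(1/2) := by
    rw [show (2:ℝ) * π / 3 = π - π/3 by ring, Real.cos_pi_sub, Real.cos_pi_div_three]
  have s2 : Real.sin (2 * π / 3) = Real.sqrt 3 / 2 := by
    rw [show (2:ℝ) * π / 3 = π - π/3 by ring, Real.sin_pi_sub, Real.sin_pi_div_three]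
  have c4 : Real.cos (4 * π / 3) = -(1/2) := by
    rw [show (4:ℝ) * π / 3 = π/3 + π by ring, Real.cos_add_pi, Real.cos_pi_div_three]
  have s4 : Real.sin (4 * π / 3) = -(Real.sqrt 3 / 2) := by
    rw [show (4:ℝ) * π / 3 = π/3 + π by ring, Real.sin_add_pi, Real.sin_pi_div_three]
  have c5 : Real.cos (5 * π / 3) = 1/2 := by
    rw [show (5:ℝ) * π / 3 = 2*π - π/3 by ring, Real.cos_two_pi_sub, Real.cos_pi_div_three]
  have s5 : Real.sin (5 * π / 3) = -(Real.sqrt 3 / 2) := by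
    rw [show (5:ℝ) * π / 3 = 2*π - π/3 by ring, Real.sin_two_pi_sub, Real.sin_pi_div_three]
  ext p
  simp only [hexV, hexS, Set.mem_range, Set.mem_insert_iff, Set.mem_singleton_iff]
  constructor
  · rintro ⟨i, rfl⟩
    fin_cases i <;>
      norm_num [Real.cos_pi_div_three, Real.sin_pi_div_three, c2, s2, c4, s4, c5, s5]
  · rintro (rfl|rfl|rfl|rfl|rfl|rfl)
    · exact ⟨⟨0, by norm_num⟩, by norm_num⟩
    · exact ⟨⟨1, by norm_num⟩, by norm_num [Real.cos_pi_div_three, Real.sin_pi_div_three]⟩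
    · exact ⟨⟨2, by norm_num⟩, by norm_num [c2, s2]⟩
    · exact ⟨⟨3, by norm_num⟩, by norm_num [Real.cos_pi, Real.sin_pi, show (3:ℝ)*π/3 = π by ring]⟩
    · exact ⟨⟨4, by norm_num⟩, by norm_num [c4, s4]⟩
    · exact ⟨⟨5, by norm_num⟩, by norm_num [c5, s5]⟩

lemma hull_le {V : Set (ℝ×ℝ)} {al be c : ℝ} (h : ∀ p ∈ V, al*p.1 + be*p.2 ≤ c) :
    ∀ x ∈ convexHull ℝ V, al*x.1 + be*x.2 ≤ c := by
  intro x hx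
  have hlin : IsLinearMap ℝ (fun p : ℝ×ℝ => al*p.1 + be*p.2) :=
    ⟨fun a b => by simp [Prod.fst_add, Prod.snd_add]; ring,
     fun t a => by simp [smul_eq_mul]; ring⟩
  exact convexHull_min h (convex_halfSpace_le hlin c) hx

lemma interior_lt {al be c : ℝ} (hne : 0 < al^2 + be^2) {T : Set (ℝ×ℝ)}
    (hT : ∀ q ∈ T, al*q.1 + be*q.2 ≤ c) {p : ℝ×ℝ} (hp : p ∈ interior T) :
    al*p.1 + be*p.2 < c := by
  obtain ⟨ε, hε, hball⟩ := Metric.mem_nhds_iff.1 (mem_interior_iff_mem_nhds.1 hp)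
  set δ := ε / (|al| + |be| + 1) with hδdef
  have habs : (0:ℝ) < |al| + |be| + 1 := by positivity
  have hδpos : 0 < δ := by positivity
  have hδε : δ * (|al| + |be| + 1) = ε := by rw [hδdef]; field_simp
  have hq : ((p.1 + (δ/2)*al, p.2 + (δ/2)*be) : ℝ×ℝ) ∈ Metric.ball p ε := by
    rw [Metric.mem_ball, Prod.dist_eq]
    have h1 : dist (p.1 + (δ/2)*al) p.1 < ε := by
      rw [Real.dist_eq, show p.1 + δ/2*al - p.1 = (δ/2)*al by ring, abs_mul,
        abs_of_pos (by positivity : (0:ℝ) < δ/2)]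
      nlinarith [abs_nonneg al, abs_nonneg be]
    have h2 : dist (p.2 + (δ/2)*be) p.2 < ε := by
      rw [Real.dist_eq, show p.2 + δ/2*be - p.2 = (δ/2)*be by ring, abs_mul,
        abs_of_pos (by positivity : (0:ℝ) < δ/2)]
      nlinarith [abs_nonneg al, abs_nonneg be]
    exact max_lt h1 h2
  have hle := hT _ (hball hq)
  simp only at hle
  nlinarith [hle]

lemma hex_ineqs {x : ℝ×ℝ} (hx : x ∈ convexHull ℝ hexV) :
    Real.sqrt 3*x.1 + x.2 ≤ Real.sqrt 3 ∧ x.2 ≤ Real.sqrt 3/2 ∧ -(Real.sqrt 3)*x.1 + x.2 ≤ Real.sqrt 3 ∧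
    -(Real.sqrt 3)*x.1 - x.2 ≤ Real.sqrt 3 ∧ -x.2 ≤ Real.sqrt 3/2 ∧ Real.sqrt 3*x.1 - x.2 ≤ Real.sqrt 3 := by
  rw [hexV_eq] at hx
  have hsq := s3_sq; have hg := s3_gt; have hl := s3_lt
  have he : ∀ al be c : ℝ, al*1+be*0 ≤ c → al*(1/2)+be*(Real.sqrt 3/2) ≤ c →
      al*(-(1/2))+be*(Real.sqrt 3/2) ≤ c → al*(-1)+be*0 ≤ c → al*(-(1/2))+be*(-(Real.sqrt 3/2)) ≤ c →
      al*(1/2)+be*(-(Real.sqrt 3/2)) ≤ c → al*x.1+be*x.2 ≤ c := by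
    intro al be c h1 h2 h3 h4 h5 h6
    refine hull_le ?_ x hx
    intro p hp
    simp only [hexS, Set.mem_insert_iff, Set.mem_singleton_iff] at hp
    rcases hp with rfl|rfl|rfl|rfl|rfl|rfl
    · simpa using h1
    · simpa using h2
    · simpa using h3
    · simpa using h4
    · simpa using h5
    · simpa using h6
  refine ⟨?_, ?_, ?_, ?_, ?_, ?_⟩
  · have := he (Real.sqrt 3) 1 (Real.sqrt 3) (by nlinarith) (by nlinarith) (by nlinarith) (by nlinarith)
      (by nlinarith) (by nlinarith); linarith
  · have := he 0 1 (Real.sqrt 3/2) (by nlinarith) (by nlinarith) (by nlinarith) (by nlinarith)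
      (by nlinarith) (by nlinarith); linarith
  · have := he (-(Real.sqrt 3)) 1 (Real.sqrt 3) (by nlinarith) (by nlinarith) (by nlinarith) (by nlinarith)
      (by nlinarith) (by nlinarith); linarith
  · have := he (-(Real.sqrt 3)) (-1) (Real.sqrt 3) (by nlinarith) (by nlinarith) (by nlinarith) (by nlinarith)
      (by nlinarith) (by nlinarith); linarith
  · have := he 0 (-1) (Real.sqrt 3/2) (by nlinarith) (by nlinarith) (by nlinarith) (by nlinarith)
      (by nlinarith) (by nlinarith); linarith
  · have := he (Real.sqrt 3) (-1) (Real.sqrt 3) (by nlinarith) (by nlinarith) (by nlinarith) (by nlinarith)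
      (by nlinarith) (by nlinarith); linarith

lemma memP1 {x : ℝ×ℝ}
    (e1 : Real.sqrt 3*x.1 + x.2 ≤ Real.sqrt 3) (e2 : x.2 ≤ Real.sqrt 3/2) (e3 : -(Real.sqrt 3)*x.1 + x.2 ≤ Real.sqrt 3)
    (hA : 0 ≤ (3-2*Real.sqrt 3)*x.1 + Real.sqrt 3*x.2) (hB : (Real.sqrt 3-3)*(x.1+x.2) ≤ 0) :
    x ∈ convexHull ℝ V₁ := by
  have hsq := s3_sq; have hg := s3_gt; have hl := s3_lt
  have hB' : 0 ≤ x.1 + x.2 := by nlinarith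
  have sc1 : (3-Real.sqrt 3)*x.1 + (Real.sqrt 3-1)*x.2 ≤ 3-Real.sqrt 3 := by
    have h := mul_le_mul_of_nonneg_left e1 (show (0:ℝ) ≤ Real.sqrt 3-1 by linarith)
    have hexp : (Real.sqrt 3-1)*(Real.sqrt 3*x.1+x.2) = (3-Real.sqrt 3)*x.1 + (Real.sqrt 3-1)*x.2 + (Real.sqrt 3*Real.sqrt 3-3)*x.1 := by ring
    have hrhs : (Real.sqrt 3-1)*Real.sqrt 3 = (3-Real.sqrt 3) + (Real.sqrt 3*Real.sqrt 3-3) := by ring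
    rw [hexp, hrhs, hsq] at h; linarith
  have sc3 : (3-2*Real.sqrt 3)*x.1 + (2-Real.sqrt 3)*x.2 ≤ 2*Real.sqrt 3-3 := by
    have h := mul_le_mul_of_nonneg_left e3 (show (0:ℝ) ≤ 2-Real.sqrt 3 by linarith)
    have hexp : (2-Real.sqrt 3)*(-(Real.sqrt 3)*x.1+x.2) = (3-2*Real.sqrt 3)*x.1 + (2-Real.sqrt 3)*x.2 + (Real.sqrt 3*Real.sqrt 3-3)*x.1 := by ring
    have hrhs : (2-Real.sqrt 3)*Real.sqrt 3 = (2*Real.sqrt 3-3) - (Real.sqrt 3*Real.sqrt 3-3) := by ring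
    rw [hexp, hrhs, hsq] at h; linarith
  rcases le_or_gt 0 (Real.sqrt 3*x.1 - x.2) with h1|h1
  · have hsub : ({(0,0), (Real.sqrt 3/2, (-3+2*Real.sqrt 3)/2), (1/2, Real.sqrt 3/2)} : Set (ℝ×ℝ)) ⊆ V₁ := by
      intro p hp; simp only [Set.mem_insert_iff, Set.mem_singleton_iff, V₁] at hp ⊢; tauto
    refine convexHull_mono hsub (mem_triangle (Real.sqrt 3/2) ((-3+2*Real.sqrt 3)/2) (1/2) (Real.sqrt 3/2) ?_ ?_ ?_ ?_)
    · nlinarith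
    · nlinarith
    · nlinarith
    · nlinarith [sc1]
  rcases le_or_gt 0 (Real.sqrt 3*x.1 + x.2) with h2|h2
  · have hsub : ({(0,0), (1/2, Real.sqrt 3/2), (-(1/2), Real.sqrt 3/2)} : Set (ℝ×ℝ)) ⊆ V₁ := by
      intro p hp; simp only [Set.mem_insert_iff, Set.mem_singleton_iff, V₁] at hp ⊢; tauto
    refine convexHull_mono hsub (mem_triangle (1/2) (Real.sqrt 3/2) (-(1/2)) (Real.sqrt 3/2) ?_ ?_ ?_ ?_)
    · nlinarith
    · nlinarith
    · nlinarith
    · nlinarith [e2]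
  · have hsub : ({(0,0), (-(1/2), Real.sqrt 3/2), ((-3+Real.sqrt 3)/2, (3-Real.sqrt 3)/2)} : Set (ℝ×ℝ)) ⊆ V₁ := by
      intro p hp; simp only [Set.mem_insert_iff, Set.mem_singleton_iff, V₁] at hp ⊢; tauto
    refine convexHull_mono hsub (mem_triangle (-(1/2)) (Real.sqrt 3/2) ((-3+Real.sqrt 3)/2) ((3-Real.sqrt 3)/2) ?_ ?_ ?_ ?_)
    · nlinarith
    · nlinarith
    · nlinarith
    · nlinarith [sc3]

lemma memP2 {x : ℝ×ℝ}
    (e3 : -(Real.sqrt 3)*x.1 + x.2 ≤ Real.sqrt 3) (e4 : -(Real.sqrt 3)*x.1 - x.2 ≤ Real.sqrt 3) (e5 : -x.2 ≤ Real.sqrt 3/2)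
    (hB : 0 ≤ (Real.sqrt 3-3)*(x.1+x.2)) (hC : Real.sqrt 3*x.1 + (3-2*Real.sqrt 3)*x.2 ≤ 0) :
    x ∈ convexHull ℝ V₂ := by
  have hsq := s3_sq; have hg := s3_gt; have hl := s3_lt
  have hB' : x.1 + x.2 ≤ 0 := by nlinarith
  have sc3 : (Real.sqrt 3-3)*x.1 + (Real.sqrt 3-1)*x.2 ≤ 3-Real.sqrt 3 := by
    have h := mul_le_mul_of_nonneg_left e3 (show (0:ℝ) ≤ Real.sqrt 3-1 by linarith)
    have hexp : (Real.sqrt 3-1)*(-(Real.sqrt 3)*x.1+x.2) = (Real.sqrt 3-3)*x.1 + (Real.sqrt 3-1)*x.2 - (Real.sqrt 3*Real.sqrt 3-3)*x.1 := by ring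
    have hrhs : (Real.sqrt 3-1)*Real.sqrt 3 = (3-Real.sqrt 3) + (Real.sqrt 3*Real.sqrt 3-3) := by ring
    rw [hexp, hrhs, hsq] at h; linarith
  have sc5 : (2*Real.sqrt 3-4)*x.2 ≤ 2*Real.sqrt 3-3 := by
    have h := mul_le_mul_of_nonneg_left e5 (show (0:ℝ) ≤ 4-2*Real.sqrt 3 by linarith)
    have hexp : (4-2*Real.sqrt 3)*(-x.2) = (2*Real.sqrt 3-4)*x.2 + 0*(Real.sqrt 3*Real.sqrt 3-3) := by ring
    have hrhs : (4-2*Real.sqrt 3)*(Real.sqrt 3/2) = (2*Real.sqrt 3-3) - (Real.sqrt 3*Real.sqrt 3-3) := by ring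
    rw [hexp, hrhs, hsq] at h; linarith
  rcases le_or_gt 0 x.2 with h1|h1
  · have hsub : ({(0,0), ((-3+Real.sqrt 3)/2, (3-Real.sqrt 3)/2), (-1,0)} : Set (ℝ×ℝ)) ⊆ V₂ := by
      intro p hp; simp only [Set.mem_insert_iff, Set.mem_singleton_iff, V₂] at hp ⊢; tauto
    refine convexHull_mono hsub (mem_triangle ((-3+Real.sqrt 3)/2) ((3-Real.sqrt 3)/2) (-1) 0 ?_ ?_ ?_ ?_)
    · nlinarith
    · nlinarith
    · nlinarith
    · nlinarith [sc3]
  rcases le_or_gt (Real.sqrt 3*x.1 - x.2) 0 with h2|h2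
  · have hsub : ({(0,0), (-1,0), (-(1/2), -(Real.sqrt 3)/2)} : Set (ℝ×ℝ)) ⊆ V₂ := by
      intro p hp; simp only [Set.mem_insert_iff, Set.mem_singleton_iff, V₂] at hp ⊢; tauto
    refine convexHull_mono hsub (mem_triangle (-1) 0 (-(1/2)) (-(Real.sqrt 3)/2) ?_ ?_ ?_ ?_)
    · nlinarith
    · nlinarith
    · nlinarith
    · nlinarith [e4]
  · have hsub : ({(0,0), (-(1/2), -(Real.sqrt 3)/2), ((3-2*Real.sqrt 3)/2, -(Real.sqrt 3)/2)} : Set (ℝ×ℝ)) ⊆ V₂ := by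
      intro p hp; simp only [Set.mem_insert_iff, Set.mem_singleton_iff, V₂] at hp ⊢; tauto
    refine convexHull_mono hsub (mem_triangle (-(1/2)) (-(Real.sqrt 3)/2) ((3-2*Real.sqrt 3)/2) (-(Real.sqrt 3)/2) ?_ ?_ ?_ ?_)
    · nlinarith
    · nlinarith
    · nlinarith
    · nlinarith [sc5]

lemma memP3 {x : ℝ×ℝ}
    (e1 : Real.sqrt 3*x.1 + x.2 ≤ Real.sqrt 3) (e5 : -x.2 ≤ Real.sqrt 3/2) (e6 : Real.sqrt 3*x.1 - x.2 ≤ Real.sqrt 3)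
    (hC : 0 ≤ Real.sqrt 3*x.1 + (3-2*Real.sqrt 3)*x.2) (hA : (3-2*Real.sqrt 3)*x.1 + Real.sqrt 3*x.2 ≤ 0) :
    x ∈ convexHull ℝ V₃ := by
  have hsq := s3_sq; have hg := s3_gt; have hl := s3_lt
  have sc5 : (2-2*Real.sqrt 3)*x.2 ≤ 3-Real.sqrt 3 := by
    have h := mul_le_mul_of_nonneg_left e5 (show (0:ℝ) ≤ 2*Real.sqrt 3-2 by linarith)
    have hexp : (2*Real.sqrt 3-2)*(-x.2) = (2-2*Real.sqrt 3)*x.2 + 0*(Real.sqrt 3*Real.sqrt 3-3) := by ring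
    have hrhs : (2*Real.sqrt 3-2)*(Real.sqrt 3/2) = (3-Real.sqrt 3) + (Real.sqrt 3*Real.sqrt 3-3) := by ring
    rw [hexp, hrhs, hsq] at h; linarith
  have sc1 : (2*Real.sqrt 3-3)*x.1 + (2-Real.sqrt 3)*x.2 ≤ 2*Real.sqrt 3-3 := by
    have h := mul_le_mul_of_nonneg_left e1 (show (0:ℝ) ≤ 2-Real.sqrt 3 by linarith)
    have hexp : (2-Real.sqrt 3)*(Real.sqrt 3*x.1+x.2) = (2*Real.sqrt 3-3)*x.1 + (2-Real.sqrt 3)*x.2 - (Real.sqrt 3*Real.sqrt 3-3)*x.1 := by ring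
    have hrhs : (2-Real.sqrt 3)*Real.sqrt 3 = (2*Real.sqrt 3-3) - (Real.sqrt 3*Real.sqrt 3-3) := by ring
    rw [hexp, hrhs, hsq] at h; linarith
  rcases le_or_gt x.2 0 with h1|h1
  · rcases le_or_gt (Real.sqrt 3*x.1 + x.2) 0 with h2|h2
    · have hsub : ({(0,0), ((3-2*Real.sqrt 3)/2, -(Real.sqrt 3)/2), (1/2, -(Real.sqrt 3)/2)} : Set (ℝ×ℝ)) ⊆ V₃ := by
        intro p hp; simp only [Set.mem_insert_iff, Set.mem_singleton_iff, V₃] at hp ⊢; tauto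
      refine convexHull_mono hsub (mem_triangle ((3-2*Real.sqrt 3)/2) (-(Real.sqrt 3)/2) (1/2) (-(Real.sqrt 3)/2) ?_ ?_ ?_ ?_)
      · nlinarith
      · nlinarith
      · nlinarith
      · nlinarith [sc5]
    · have hsub : ({(0,0), (1/2, -(Real.sqrt 3)/2), (1,0)} : Set (ℝ×ℝ)) ⊆ V₃ := by
        intro p hp; simp only [Set.mem_insert_iff, Set.mem_singleton_iff, V₃] at hp ⊢; tauto
      refine convexHull_mono hsub (mem_triangle (1/2) (-(Real.sqrt 3)/2) 1 0 ?_ ?_ ?_ ?_)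
      · nlinarith
      · nlinarith
      · nlinarith
      · nlinarith [e6]
  · have hsub : ({(0,0), (1,0), (Real.sqrt 3/2, (-3+2*Real.sqrt 3)/2)} : Set (ℝ×ℝ)) ⊆ V₃ := by
      intro p hp; simp only [Set.mem_insert_iff, Set.mem_singleton_iff, V₃] at hp ⊢; tauto
    refine convexHull_mono hsub (mem_triangle 1 0 (Real.sqrt 3/2) ((-3+2*Real.sqrt 3)/2) ?_ ?_ ?_ ?_)
    · nlinarith
    · nlinarith
    · nlinarith
    · nlinarith [sc1]

lemma V1_sub : V₁ ⊆ convexHull ℝ hexV := by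
  rw [hexV_eq]
  have hsq := s3_sq; have hg := s3_gt; have hl := s3_lt
  have hH0 : (((1:ℝ),(0:ℝ)) : ℝ×ℝ) ∈ hexS := by simp [hexS]
  have hH1 : (((1/2 : ℝ), Real.sqrt 3/2) : ℝ×ℝ) ∈ hexS := by simp [hexS]
  have hH2 : (((-(1/2) : ℝ), Real.sqrt 3/2) : ℝ×ℝ) ∈ hexS := by simp [hexS]
  have hH3 : (((-1 : ℝ), (0:ℝ)) : ℝ×ℝ) ∈ hexS := by simp [hexS]
  have hH4 : (((-(1/2) : ℝ), -(Real.sqrt 3/2)) : ℝ×ℝ) ∈ hexS := by simp [hexS]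
  have hH5 : (((1/2 : ℝ), -(Real.sqrt 3/2)) : ℝ×ℝ) ∈ hexS := by simp [hexS]
  have hb1 : (0:ℝ) ≤ Real.sqrt 3 - 1 := by linarith
  have hb2 : (0:ℝ) ≤ 2 - Real.sqrt 3 := by linarith
  intro p hp
  simp only [V₁, Set.mem_insert_iff, Set.mem_singleton_iff] at hp
  rcases hp with rfl|rfl|rfl|rfl|rfl
  · have heq : (((0:ℝ),(0:ℝ)) : ℝ×ℝ) = (1/2 : ℝ) • (((1:ℝ),(0:ℝ)) : ℝ×ℝ)
        + (1/2:ℝ) • (((-1:ℝ),(0:ℝ)) : ℝ×ℝ) + (0:ℝ) • (((1:ℝ),(0:ℝ)) : ℝ×ℝ) := by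
      norm_num [Prod.ext_iff]
    rw [heq]
    exact combo3_mem hH0 hH3 hH0 (by norm_num) (by norm_num) le_rfl (by norm_num)
  · have heq : ((Real.sqrt 3/2, (-3+2*Real.sqrt 3)/2) : ℝ×ℝ) = (Real.sqrt 3-1 : ℝ) • (((1:ℝ),(0:ℝ)) : ℝ×ℝ)
        + (2-Real.sqrt 3:ℝ) • (((1/2 : ℝ), Real.sqrt 3/2) : ℝ×ℝ) + (0:ℝ) • (((1:ℝ),(0:ℝ)) : ℝ×ℝ) := by
      norm_num [Prod.ext_iff] <;> constructor <;> linarith [hsq]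
    rw [heq]
    exact combo3_mem hH0 hH1 hH0 hb1 hb2 le_rfl (by norm_num)
  · exact subset_convexHull ℝ hexS hH1
  · exact subset_convexHull ℝ hexS hH2
  · have heq : (((-3+Real.sqrt 3)/2, (3-Real.sqrt 3)/2) : ℝ×ℝ) = (Real.sqrt 3-1 : ℝ) • (((-(1/2) : ℝ), Real.sqrt 3/2) : ℝ×ℝ)
        + (2-Real.sqrt 3:ℝ) • (((-1:ℝ),(0:ℝ)) : ℝ×ℝ) + (0:ℝ) • (((1:ℝ),(0:ℝ)) : ℝ×ℝ) := by
      norm_num [Prod.ext_iff] <;> constructor <;> linarith [hsq]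
    rw [heq]
    exact combo3_mem hH2 hH3 hH0 hb1 hb2 le_rfl (by norm_num)

lemma V2_sub : V₂ ⊆ convexHull ℝ hexV := by
  rw [hexV_eq]
  have hsq := s3_sq; have hg := s3_gt; have hl := s3_lt
  have hH0 : (((1:ℝ),(0:ℝ)) : ℝ×ℝ) ∈ hexS := by simp [hexS]
  have hH2 : (((-(1/2) : ℝ), Real.sqrt 3/2) : ℝ×ℝ) ∈ hexS := by simp [hexS]
  have hH3 : (((-1 : ℝ), (0:ℝ)) : ℝ×ℝ) ∈ hexS := by simp [hexS]
  have hH4 : (((-(1/2) : ℝ), -(Real.sqrt 3/2)) : ℝ×ℝ) ∈ hexS := by simp [hexS]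
  have hH5 : (((1/2 : ℝ), -(Real.sqrt 3/2)) : ℝ×ℝ) ∈ hexS := by simp [hexS]
  have hb1 : (0:ℝ) ≤ Real.sqrt 3 - 1 := by linarith
  have hb2 : (0:ℝ) ≤ 2 - Real.sqrt 3 := by linarith
  intro p hp
  simp only [V₂, Set.mem_insert_iff, Set.mem_singleton_iff] at hp
  rcases hp with rfl|rfl|rfl|rfl|rfl
  · have heq : (((0:ℝ),(0:ℝ)) : ℝ×ℝ) = (1/2 : ℝ) • (((1:ℝ),(0:ℝ)) : ℝ×ℝ)
        + (1/2:ℝ) • (((-1:ℝ),(0:ℝ)) : ℝ×ℝ) + (0:ℝ) • (((1:ℝ),(0:ℝ)) : ℝ×ℝ) := by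
      norm_num [Prod.ext_iff]
    rw [heq]
    exact combo3_mem hH0 hH3 hH0 (by norm_num) (by norm_num) le_rfl (by norm_num)
  · have heq : (((-3+Real.sqrt 3)/2, (3-Real.sqrt 3)/2) : ℝ×ℝ) = (Real.sqrt 3-1 : ℝ) • (((-(1/2) : ℝ), Real.sqrt 3/2) : ℝ×ℝ)
        + (2-Real.sqrt 3:ℝ) • (((-1:ℝ),(0:ℝ)) : ℝ×ℝ) + (0:ℝ) • (((1:ℝ),(0:ℝ)) : ℝ×ℝ) := by
      norm_num [Prod.ext_iff] <;> constructor <;> linarith [hsq]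
    rw [heq]
    exact combo3_mem hH2 hH3 hH0 hb1 hb2 le_rfl (by norm_num)
  · exact subset_convexHull ℝ hexS hH3
  · have heq : ((-(1/2), -(Real.sqrt 3)/2) : ℝ×ℝ) = (((-(1/2) : ℝ), -(Real.sqrt 3/2)) : ℝ×ℝ) := by
      norm_num [Prod.ext_iff]; ring
    rw [heq]
    exact subset_convexHull ℝ hexS hH4
  · have heq : (((3-2*Real.sqrt 3)/2, -(Real.sqrt 3)/2) : ℝ×ℝ) = (Real.sqrt 3-1 : ℝ) • (((-(1/2) : ℝ), -(Real.sqrt 3/2)) : ℝ×ℝ)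
        + (2-Real.sqrt 3:ℝ) • (((1/2:ℝ), -(Real.sqrt 3/2)) : ℝ×ℝ) + (0:ℝ) • (((1:ℝ),(0:ℝ)) : ℝ×ℝ) := by
      norm_num [Prod.ext_iff] <;> constructor <;> linarith [hsq]
    rw [heq]
    exact combo3_mem hH4 hH5 hH0 hb1 hb2 le_rfl (by norm_num)

lemma V3_sub : V₃ ⊆ convexHull ℝ hexV := by
  rw [hexV_eq]
  have hsq := s3_sq; have hg := s3_gt; have hl := s3_lt
  have hH0 : (((1:ℝ),(0:ℝ)) : ℝ×ℝ) ∈ hexS := by simp [hexS]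
  have hH1 : (((1/2 : ℝ), Real.sqrt 3/2) : ℝ×ℝ) ∈ hexS := by simp [hexS]
  have hH3 : (((-1 : ℝ), (0:ℝ)) : ℝ×ℝ) ∈ hexS := by simp [hexS]
  have hH4 : (((-(1/2) : ℝ), -(Real.sqrt 3/2)) : ℝ×ℝ) ∈ hexS := by simp [hexS]
  have hH5 : (((1/2 : ℝ), -(Real.sqrt 3/2)) : ℝ×ℝ) ∈ hexS := by simp [hexS]
  have hb1 : (0:ℝ) ≤ Real.sqrt 3 - 1 := by linarith
  have hb2 : (0:ℝ) ≤ 2 - Real.sqrt 3 := by linarith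
  intro p hp
  simp only [V₃, Set.mem_insert_iff, Set.mem_singleton_iff] at hp
  rcases hp with rfl|rfl|rfl|rfl|rfl
  · have heq : (((0:ℝ),(0:ℝ)) : ℝ×ℝ) = (1/2 : ℝ) • (((1:ℝ),(0:ℝ)) : ℝ×ℝ)
        + (1/2:ℝ) • (((-1:ℝ),(0:ℝ)) : ℝ×ℝ) + (0:ℝ) • (((1:ℝ),(0:ℝ)) : ℝ×ℝ) := by
      norm_num [Prod.ext_iff]
    rw [heq]
    exact combo3_mem hH0 hH3 hH0 (by norm_num) (by norm_num) le_rfl (by norm_num)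
  · have heq : (((3-2*Real.sqrt 3)/2, -(Real.sqrt 3)/2) : ℝ×ℝ) = (Real.sqrt 3-1 : ℝ) • (((-(1/2) : ℝ), -(Real.sqrt 3/2)) : ℝ×ℝ)
        + (2-Real.sqrt 3:ℝ) • (((1/2:ℝ), -(Real.sqrt 3/2)) : ℝ×ℝ) + (0:ℝ) • (((1:ℝ),(0:ℝ)) : ℝ×ℝ) := by
      norm_num [Prod.ext_iff] <;> constructor <;> linarith [hsq]
    rw [heq]
    exact combo3_mem hH4 hH5 hH0 hb1 hb2 le_rfl (by norm_num)
  · have heq : ((1/2, -(Real.sqrt 3)/2) : ℝ×ℝ) = (((1/2:ℝ), -(Real.sqrt 3/2)) : ℝ×ℝ) := by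
      norm_num [Prod.ext_iff]; ring
    rw [heq]
    exact subset_convexHull ℝ hexS hH5
  · exact subset_convexHull ℝ hexS hH0
  · have heq : ((Real.sqrt 3/2, (-3+2*Real.sqrt 3)/2) : ℝ×ℝ) = (Real.sqrt 3-1 : ℝ) • (((1:ℝ),(0:ℝ)) : ℝ×ℝ)
        + (2-Real.sqrt 3:ℝ) • (((1/2 : ℝ), Real.sqrt 3/2) : ℝ×ℝ) + (0:ℝ) • (((1:ℝ),(0:ℝ)) : ℝ×ℝ) := by
      norm_num [Prod.ext_iff] <;> constructor <;> linarith [hsq]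
    rw [heq]
    exact combo3_mem hH0 hH1 hH0 hb1 hb2 le_rfl (by norm_num)

/-- The three pentagons of the unperturbed dissection cover the regular unit
hexagon and have pairwise disjoint interiors. -/
theorem pentagons_tile_hexagon :
    convexHull ℝ V₁ ∪ convexHull ℝ V₂ ∪ convexHull ℝ V₃ = convexHull ℝ hexV ∧
    Disjoint (interior (convexHull ℝ V₁)) (interior (convexHull ℝ V₂)) ∧
    Disjoint (interior (convexHull ℝ V₁)) (interior (convexHull ℝ V₃)) ∧
    Disjoint (interior (convexHull ℝ V₂)) (interior (convexHull ℝ V₃)) := by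
  have hsq := s3_sq; have hg := s3_gt; have hl := s3_lt
  refine ⟨?_, ?_, ?_, ?_⟩
  · apply Set.Subset.antisymm
    · refine Set.union_subset (Set.union_subset ?_ ?_) ?_
      · exact convexHull_min V1_sub (convex_convexHull ℝ _)
      · exact convexHull_min V2_sub (convex_convexHull ℝ _)
      · exact convexHull_min V3_sub (convex_convexHull ℝ _)
    · intro x hx
      obtain ⟨e1, e2, e3, e4, e5, e6⟩ := hex_ineqs hx
      rcases le_or_gt 0 ((3-2*Real.sqrt 3)*x.1 + Real.sqrt 3*x.2) with hA|hA
      · rcases le_or_gt ((Real.sqrt 3-3)*(x.1+x.2)) 0 with hB|hB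
        · exact Set.mem_union_left _ (Set.mem_union_left _ (memP1 e1 e2 e3 hA hB))
        · have hC : Real.sqrt 3*x.1 + (3-2*Real.sqrt 3)*x.2 ≤ 0 := by linarith
          exact Set.mem_union_left _ (Set.mem_union_right _ (memP2 e3 e4 e5 hB.le hC))
      · rcases le_or_gt 0 (Real.sqrt 3*x.1 + (3-2*Real.sqrt 3)*x.2) with hC|hC
        · exact Set.mem_union_right _ (memP3 e1 e5 e6 hC hA.le)
        · have hB : 0 ≤ (Real.sqrt 3-3)*(x.1+x.2) := by linarith
          exact Set.mem_union_left _ (Set.mem_union_right _ (memP2 e3 e4 e5 hB hC.le))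
  · rw [Set.disjoint_left]
    intro p h1 h2
    have hv1 : ∀ q ∈ V₁, (-1)*q.1 + (-1)*q.2 ≤ 0 := by
      intro q hq; simp only [V₁, Set.mem_insert_iff, Set.mem_singleton_iff] at hq
      rcases hq with rfl|rfl|rfl|rfl|rfl <;> norm_num <;> nlinarith
    have hv2 : ∀ q ∈ V₂, 1*q.1 + 1*q.2 ≤ 0 := by
      intro q hq; simp only [V₂, Set.mem_insert_iff, Set.mem_singleton_iff] at hq
      rcases hq with rfl|rfl|rfl|rfl|rfl <;> norm_num <;> nlinarith
    have l1 := interior_lt (by norm_num) (hull_le hv1) h1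
    have l2 := interior_lt (by norm_num) (hull_le hv2) h2
    linarith
  · rw [Set.disjoint_left]
    intro p h1 h2
    have hv1 : ∀ q ∈ V₁, (2*Real.sqrt 3-3)*q.1 + (-(Real.sqrt 3))*q.2 ≤ 0 := by
      intro q hq; simp only [V₁, Set.mem_insert_iff, Set.mem_singleton_iff] at hq
      rcases hq with rfl|rfl|rfl|rfl|rfl <;> norm_num <;> nlinarith
    have hv3 : ∀ q ∈ V₃, (3-2*Real.sqrt 3)*q.1 + Real.sqrt 3*q.2 ≤ 0 := by
      intro q hq; simp only [V₃, Set.mem_insert_iff, Set.mem_singleton_iff] at hq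
      rcases hq with rfl|rfl|rfl|rfl|rfl <;> norm_num <;> nlinarith
    have l1 := interior_lt (by nlinarith [sq_nonneg (2*Real.sqrt 3-3), sq_nonneg (Real.sqrt 3)]) (hull_le hv1) h1
    have l3 := interior_lt (by nlinarith [sq_nonneg (3-2*Real.sqrt 3), sq_nonneg (Real.sqrt 3)]) (hull_le hv3) h2
    nlinarith [l1, l3]
  · rw [Set.disjoint_left]
    intro p h1 h2
    have hv2 : ∀ q ∈ V₂, Real.sqrt 3*q.1 + (3-2*Real.sqrt 3)*q.2 ≤ 0 := by
      intro q hq; simp only [V₂, Set.mem_insert_iff, Set.mem_singleton_iff] at hq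
      rcases hq with rfl|rfl|rfl|rfl|rfl <;> norm_num <;> nlinarith
    have hv3 : ∀ q ∈ V₃, (-(Real.sqrt 3))*q.1 + (2*Real.sqrt 3-3)*q.2 ≤ 0 := by
      intro q hq; simp only [V₃, Set.mem_insert_iff, Set.mem_singleton_iff] at hq
      rcases hq with rfl|rfl|rfl|rfl|rfl <;> norm_num <;> nlinarith
    have l2 := interior_lt (by nlinarith [sq_nonneg (3-2*Real.sqrt 3), sq_nonneg (Real.sqrt 3)]) (hull_le hv2) h1
    have l3 := interior_lt (by nlinarith [sq_nonneg (2*Real.sqrt 3-3), sq_nonneg (Real.sqrt 3)]) (hull_le hv3) h2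
    nlinarith [l2, l3]
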